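/- Let q be a prime power, n coprime to q, and P a μ_q-invariant subset of Z/nZ. The cyclic code C_P satisfies φ_{s,t}(C_P) = C_P^⊥ for some isometry φ_{s,t} if and only if there exist s ∈ (Z/nZ)^* and t with qt ≡ t (mod n) such that Z/nZ is the disjoint union of P and ρ_{−s,t}(P) = {−s(i+t) : i ∈ P}. -/

import Mathlib

open Polynomial

/-- `f_P(X) = ∏_{i∈P} (X − θ^i)` for a subset `P ⊆ ℤ/nℤ`. -/
noncomputable def fPoly {E : Type*} [Field E] {n : ℕ} (θ : E) (P : Finset (ZMod n)) : E[X] :=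
  ∏ i ∈ P, (X - C (θ ^ i.val))

/-- The unique representative of degree `< n` of an element of `F[X]/⟨X^n−1⟩`. -/
noncomputable def stdRep {F : Type*} [Field F] {n : ℕ} (hn : n ≠ 0)
    (x : AdjoinRoot (X ^ n - 1 : F[X])) : F[X] :=
  AdjoinRoot.modByMonicHom
    (by simpa using monic_X_pow_sub_C (1 : F) hn : (X ^ n - 1 : F[X]).Monic) x

/-- The cyclic code in `F[X]/⟨X^n−1⟩` with check polynomial `h`. -/
noncomputable def cyclicCode (F : Type*) [Field F] (n : ℕ) (h : F[X]) :
    Submodule F (AdjoinRoot (X ^ n - 1 : F[X])) :=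
  LinearMap.ker (LinearMap.mulRight F (AdjoinRoot.mk (X ^ n - 1 : F[X]) h))

/-- The Euclidean dual of a code `C ⊆ F[X]/⟨X^n−1⟩`. -/
noncomputable def dualCode (F : Type*) [Field F] (n : ℕ) (hn : n ≠ 0)
    (Cd : Set (AdjoinRoot (X ^ n - 1 : F[X]))) : Set (AdjoinRoot (X ^ n - 1 : F[X])) :=
  {y | ∀ x ∈ Cd, ∑ i ∈ Finset.range n, (stdRep hn x).coeff i * (stdRep hn y).coeff i = 0}

/-!
Evaluating at the `n`-th roots of unity `θ ^ j` identifies a word of `F[X]/⟨X^n - 1⟩` with its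
spectrum `j ↦ a(θ ^ j)`, and the codes in play are determined by the set of `j` where all their
words vanish: `C_P` has zeros `Pᶜ`; its dual has zeros `-P`, because the coefficient pairing is,
up to the unit `n`, the pairing `∑ⱼ a(θ ^ j) b(θ ^ -j)` of spectra; and `a(X) ↦ a(θ^{-t} X^{s'})`
pulls zero sets back along `j ↦ s' j - t`. Distinct zero sets give distinct codes, as the
generator polynomials realise them exactly, so `φ_{s,t}(C_P) = C_P^⊥` says that `i ↦ s (i + t)`
carries `Pᶜ` onto `-P`, i.e. `ρ_{-s,t}(P) = Pᶜ`. Finally `θ^{-t}` lies in `F` exactly when it is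
fixed by the Frobenius, i.e. when `q t ≡ t`.
-/

open Pointwise

theorem Polynomial.prod_X_sub_C_dvd_of_isRoot {K ι : Type*} [Field K] {u : ι → K}
    (hu : Function.Injective u) {S : Finset ι} {A : K[X]} (h : ∀ i ∈ S, A.IsRoot (u i)) :
    ∏ i ∈ S, (X - C (u i)) ∣ A :=
  Finset.prod_dvd_of_coprime ((pairwise_coprime_X_sub_C hu).set_pairwise _)
    fun i hi => dvd_iff_isRoot.2 (h i hi)

theorem FiniteField.exists_algebraMap_eq_of_pow_card_eq {F E : Type*} [Field F] [Fintype F]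
    [Field E] [Algebra F E] {x : E} (hx : x ^ Fintype.card F = x) :
    ∃ b : F, algebraMap F E b = x := by
  have hq := Fintype.one_lt_card (α := F)
  have hsplit : (X ^ Fintype.card F - X : F[X]).Splits := by
    rw [splits_iff_card_roots, FiniteField.roots_X_pow_card_sub_X,
      FiniteField.X_pow_card_sub_X_natDegree_eq F hq]
    rfl
  exact hsplit.mem_range_of_isRoot (FiniteField.X_pow_card_sub_X_ne_zero F hq) (by simp [hx])

theorem Nat.Coprime.exists_mul_modEq_one {s n : ℕ} [NeZero n] (hs : s.Coprime n) :
    ∃ s', s * s' ≡ 1 [MOD n] := by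
  refine ⟨((ZMod.unitOfCoprime s hs)⁻¹ : (ZMod n)ˣ).val.val, ?_⟩
  rw [← ZMod.natCast_eq_natCast_iff]
  push_cast
  rw [ZMod.natCast_zmod_val, ← ZMod.coe_unitOfCoprime s hs, Units.mul_inv]

namespace AddChar

variable {E : Type*} [Field E] {n : ℕ} {ψ : AddChar (ZMod n) E}

theorem zmod_apply_pow_eq_one (ψ : AddChar (ZMod n) E) (j : ZMod n) : ψ j ^ n = 1 := by
  rw [← map_nsmul_eq_pow, nsmul_eq_mul, ZMod.natCast_self, zero_mul, map_zero_eq_one]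

variable [NeZero n]

theorem IsPrimitive.zmod_injective (hψ : ψ.IsPrimitive) : Function.Injective ψ :=
  injective_iff.2 fun _ h => (hψ.zmod_char_eq_one_iff n _).1 h

theorem IsPrimitive.sum_pow_mul_pow_neg (hψ : ψ.IsPrimitive) {i k : ℕ} (hi : i < n)
    (hk : k < n) : ∑ j : ZMod n, ψ j ^ i * ψ (-j) ^ k = if i = k then (n : E) else 0 := by
  have hterm (j : ZMod n) : ψ j ^ i * ψ (-j) ^ k = ψ (j * ((i : ZMod n) - k)) := by
    rw [← map_nsmul_eq_pow, ← map_nsmul_eq_pow, ← map_add_eq_mul, nsmul_eq_mul, nsmul_eq_mul]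
    ring_nf
  have hiff : (i : ZMod n) - k = 0 ↔ i = k := by
    rw [sub_eq_zero, ZMod.natCast_eq_natCast_iff', Nat.mod_eq_of_lt hi, Nat.mod_eq_of_lt hk]
  simp_rw [hterm, sum_mulShift _ hψ, ZMod.card, hiff, Nat.cast_ite, Nat.cast_zero]

theorem IsPrimitive.eq_zero_of_forall_sum_mul_eq_zero (hψ : ψ.IsPrimitive) [NeZero (n : E)]
    {w : ZMod n → E} (h : ∀ k, ∑ j, w j * ψ (k * j) = 0) (j₀ : ZMod n) : w j₀ = 0 := by
  have hinv : ∑ k, ψ (-(k * j₀)) * ∑ j, w j * ψ (k * j) = n * w j₀ := by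
    have hterm (j : ZMod n) :
        ∑ k, ψ (-(k * j₀)) * (w j * ψ (k * j)) = w j * ∑ k, ψ (k * (j - j₀)) := by
      rw [Finset.mul_sum]
      refine Finset.sum_congr rfl fun k _ => ?_
      rw [mul_sub, sub_eq_neg_add, map_add_eq_mul]
      ring
    simp_rw [Finset.mul_sum]
    rw [Finset.sum_comm]
    simp_rw [hterm, sum_mulShift _ hψ, sub_eq_zero, ZMod.card]
    simp [mul_comm]
  simp_rw [h, mul_zero, Finset.sum_const_zero] at hinv
  exact (mul_eq_zero.1 hinv.symm).resolve_left (NeZero.ne _)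

end AddChar

namespace CyclicCode

variable {F E : Type*} [Field F] [Field E] [Algebra F E] {n : ℕ}

local notation "𝓡" => AdjoinRoot (X ^ n - 1 : F[X])

theorem root_pow_eq_one : AdjoinRoot.root (X ^ n - 1 : F[X]) ^ n = 1 := by
  have h := AdjoinRoot.mk_self (f := (X ^ n - 1 : F[X]))
  rwa [map_sub, map_pow, AdjoinRoot.mk_X, map_one, sub_eq_zero] at h

theorem mk_stdRep (hn : n ≠ 0) (x : 𝓡) : AdjoinRoot.mk _ (stdRep hn x) = x :=
  AdjoinRoot.mk_leftInverse _ x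

theorem natDegree_stdRep_lt (hn : n ≠ 0) (x : 𝓡) : (stdRep hn x).natDegree < n := by
  obtain ⟨p, rfl⟩ := AdjoinRoot.mk_surjective x
  have hmonic : (X ^ n - 1 : F[X]).Monic := by simpa using monic_X_pow_sub_C (1 : F) hn
  have hdeg : (X ^ n - 1 : F[X]).natDegree = n := by
    simpa using natDegree_X_pow_sub_C (n := n) (r := (1 : F))
  have hne : (X ^ n - 1 : F[X]) ≠ 1 := fun h => hn (by simpa [h] using hdeg.symm)
  rw [stdRep, AdjoinRoot.modByMonicHom_mk]
  simpa [hdeg] using natDegree_modByMonic_lt p hmonic hne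

variable (ψ : AddChar (ZMod n) E)

noncomputable def evalAt (j : ZMod n) : 𝓡 →ₐ[F] E :=
  AdjoinRoot.liftAlgHom _ (Algebra.ofId F E) (ψ j) (by simp [ψ.zmod_apply_pow_eq_one])

theorem evalAt_mk (j : ZMod n) (p : F[X]) : evalAt ψ j (AdjoinRoot.mk _ p) = aeval (ψ j) p :=
  rfl

theorem evalAt_root (j : ZMod n) : evalAt ψ j (AdjoinRoot.root (X ^ n - 1 : F[X])) = ψ j :=
  AdjoinRoot.liftAlgHom_root ..

def zeroSet (x : 𝓡) : Set (ZMod n) := {j | evalAt (F := F) ψ j x = 0}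

variable (F) in
def zeroCode (Z : Set (ZMod n)) : Set 𝓡 := {x | Z ⊆ zeroSet ψ x}

theorem eq_of_zeroCode_eq {Z Z' : Set (ZMod n)} {x x' : 𝓡} (hx : zeroSet ψ x = Z)
    (hx' : zeroSet ψ x' = Z') (h : zeroCode F ψ Z = zeroCode F ψ Z') : Z = Z' := by
  have hxZ' : x ∈ zeroCode F ψ Z' := by rw [← h]; exact hx.ge
  have hx'Z : x' ∈ zeroCode F ψ Z := by rw [h]; exact hx'.ge
  exact (hx'Z.trans hx'.le).antisymm (hxZ'.trans hx.le)

variable (n) in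
noncomputable def compMonomial (b : F) (m : ℕ) (hb : b ^ n = 1) : 𝓡 →ₐ[F] 𝓡 :=
  AdjoinRoot.liftAlgHom _ (Algebra.ofId F 𝓡) (algebraMap F 𝓡 b * AdjoinRoot.root _ ^ m) (by
    simp only [eval₂_sub, eval₂_pow, eval₂_X, eval₂_one]
    rw [mul_pow, ← map_pow, hb, map_one, one_mul, ← pow_mul, mul_comm, pow_mul, root_pow_eq_one,
      one_pow, sub_self])

theorem compMonomial_root (b : F) (m : ℕ) (hb : b ^ n = 1) :
    compMonomial n b m hb (AdjoinRoot.root _) = algebraMap F 𝓡 b * AdjoinRoot.root _ ^ m :=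
  AdjoinRoot.liftAlgHom_root ..

theorem mk_comp_stdRep (hn : n ≠ 0) (b : F) (m : ℕ) (hb : b ^ n = 1) (x : 𝓡) :
    AdjoinRoot.mk _ ((stdRep hn x).comp (C b * X ^ m)) = compMonomial n b m hb x := by
  conv_rhs => rw [← mk_stdRep hn x]
  rw [comp_eq_aeval, ← AdjoinRoot.coe_mkₐ, ← aeval_algHom_apply]
  simp [compMonomial, aeval_def]

variable {ψ}

theorem evalAt_compMonomial {b : F} {τ : ZMod n} (hbτ : algebraMap F E b = ψ τ) (m : ℕ)
    (hb : b ^ n = 1) (j : ZMod n) (x : 𝓡) :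
    evalAt ψ j (compMonomial n b m hb x) = evalAt ψ (m * j + τ) x := by
  suffices (evalAt ψ j).comp (compMonomial n b m hb) = evalAt ψ (m * j + τ) from
    AlgHom.congr_fun this x
  refine AdjoinRoot.algHom_ext ?_
  rw [AlgHom.comp_apply, compMonomial_root, map_mul, map_pow, AlgHom.commutes, evalAt_root,
    evalAt_root, hbτ, AddChar.map_add_eq_mul, ← AddChar.map_nsmul_eq_pow, nsmul_eq_mul, mul_comm]

theorem zeroSet_compMonomial {b : F} {τ : ZMod n} (hbτ : algebraMap F E b = ψ τ) (m : ℕ)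
    (hb : b ^ n = 1) (x : 𝓡) :
    zeroSet ψ (compMonomial n b m hb x) = (fun j => m * j + τ) ⁻¹' zeroSet ψ x := by
  ext j
  simp [zeroSet, evalAt_compMonomial hbτ]

variable [NeZero n]

theorem compMonomial_surjective {b : F} {m k : ℕ} (hb : b ^ n = 1) (hmk : m * k ≡ 1 [MOD n]) :
    Function.Surjective (compMonomial n b m hb) := by
  have hc : (b ^ k)⁻¹ ^ n = 1 := by rw [inv_pow, ← pow_mul, mul_comm, pow_mul, hb, one_pow, inv_one]
  have hb0 : b ≠ 0 := by rintro rfl; simp [NeZero.ne n] at hb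
  have hid : (compMonomial n b m hb).comp (compMonomial n _ k hc) = AlgHom.id F 𝓡 := by
    refine AdjoinRoot.algHom_ext ?_
    rw [AlgHom.comp_apply, compMonomial_root, map_mul, map_pow, AlgHom.commutes, compMonomial_root,
      mul_pow, ← pow_mul, ← mul_assoc, ← map_pow, ← map_mul, inv_mul_cancel₀ (pow_ne_zero _ hb0),
      map_one, one_mul, pow_eq_pow_mod _ root_pow_eq_one, hmk, ← pow_eq_pow_mod _ root_pow_eq_one,
      pow_one, AlgHom.id_apply]
  exact fun x => ⟨compMonomial n _ k hc x, AlgHom.congr_fun hid x⟩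

theorem image_compMonomial_zeroCode {b : F} {τ : ZMod n} (hbτ : algebraMap F E b = ψ τ)
    {m k : ℕ} (hb : b ^ n = 1) (hmk : m * k ≡ 1 [MOD n]) (Z : Set (ZMod n)) :
    compMonomial n b m hb '' zeroCode F ψ Z = zeroCode F ψ ((fun j => m * j + τ) ⁻¹' Z) := by
  have hmk' : (m : ZMod n) * k = 1 := by exact_mod_cast (ZMod.natCast_eq_natCast_iff _ _ _).2 hmk
  have hA : Function.Surjective fun j : ZMod n => m * j + τ := fun j =>
    ⟨k * (j - τ), show (m : ZMod n) * (k * (j - τ)) + τ = j by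
      rw [← mul_assoc, hmk', one_mul, sub_add_cancel]⟩
  conv_rhs => rw [← (compMonomial_surjective hb hmk).image_preimage (zeroCode F ψ _)]
  congr 1
  ext x
  simp only [Set.mem_preimage, zeroCode, Set.mem_ofPred_eq, zeroSet_compMonomial hbτ,
    hA.preimage_subset_preimage_iff]

theorem map_X_pow_sub_one_eq_prod (hψ : ψ.IsPrimitive) :
    (X ^ n - 1 : F[X]).map (algebraMap F E) = ∏ j : ZMod n, (X - C (ψ j)) := by
  refine eq_of_monic_of_dvd_of_natDegree_le (monic_prod_of_monic _ _ fun j _ => monic_X_sub_C _)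
    ?_ ?_ ?_
  · simpa using monic_X_pow_sub_C (1 : E) (NeZero.ne n)
  · exact prod_X_sub_C_dvd_of_isRoot hψ.zmod_injective fun j _ => by
      simp [ψ.zmod_apply_pow_eq_one]
  · simpa using (natDegree_X_pow_sub_C (n := n) (r := (1 : E))).le

theorem zeroSet_mk (hψ : ψ.IsPrimitive) {g : F[X]} {Z : Finset (ZMod n)}
    (hg : g.map (algebraMap F E) = ∏ i ∈ Z, (X - C (ψ i))) :
    zeroSet ψ (AdjoinRoot.mk _ g) = Z := by
  ext j
  simp [zeroSet, evalAt_mk, ← eval_map_algebraMap, hg, eval_prod, Finset.prod_eq_zero_iff,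
    sub_eq_zero, hψ.zmod_injective.eq_iff]

theorem eq_zero_of_zeroSet_eq_univ (hψ : ψ.IsPrimitive) {x : 𝓡}
    (hx : zeroSet ψ x = Set.univ) : x = 0 := by
  obtain ⟨a, rfl⟩ := AdjoinRoot.mk_surjective x
  rw [AdjoinRoot.mk_eq_zero, ← map_dvd_map' (algebraMap F E), map_X_pow_sub_one_eq_prod hψ]
  refine prod_X_sub_C_dvd_of_isRoot hψ.zmod_injective fun j _ => ?_
  have hj : j ∈ zeroSet ψ (AdjoinRoot.mk _ a) := hx ▸ Set.mem_univ j
  simpa [zeroSet, evalAt_mk, eval_map_algebraMap] using hj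

theorem cyclicCode_eq_zeroCode (hψ : ψ.IsPrimitive) {f : F[X]} {P : Finset (ZMod n)}
    (hf : f.map (algebraMap F E) = ∏ i ∈ P, (X - C (ψ i))) :
    (cyclicCode F n f : Set 𝓡) = zeroCode F ψ (↑P)ᶜ := by
  have hfP := zeroSet_mk hψ hf
  ext x
  simp only [SetLike.mem_coe, cyclicCode, LinearMap.mem_ker, LinearMap.mulRight_apply]
  constructor
  · intro h j hj
    have hj' : evalAt ψ j x * evalAt ψ j (AdjoinRoot.mk _ f) = 0 := by rw [← map_mul, h, map_zero]
    exact (mul_eq_zero.1 hj').resolve_right fun hjP => hj (hfP ▸ hjP)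
  · intro h
    refine eq_zero_of_zeroSet_eq_univ hψ (Set.eq_univ_of_forall fun j => ?_)
    show evalAt ψ j (x * AdjoinRoot.mk _ f) = 0
    rw [map_mul]
    by_cases hj : j ∈ P
    · rw [show evalAt ψ j (AdjoinRoot.mk _ f) = 0 from hfP.ge hj, mul_zero]
    · rw [show evalAt ψ j x = 0 from h hj, zero_mul]

theorem exists_map_eq_prod_compl (hψ : ψ.IsPrimitive) {f : F[X]} {P : Finset (ZMod n)}
    (hf : f.map (algebraMap F E) = ∏ i ∈ P, (X - C (ψ i))) :
    ∃ h : F[X], h.map (algebraMap F E) = ∏ i ∈ Pᶜ, (X - C (ψ i)) := by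
  have hsplit := map_X_pow_sub_one_eq_prod (F := F) hψ
  rw [← Finset.prod_mul_prod_compl P] at hsplit
  obtain ⟨h, hh⟩ : f ∣ X ^ n - 1 := by
    rw [← map_dvd_map' (algebraMap F E), hsplit, hf]
    exact dvd_mul_right _ _
  refine ⟨h, mul_left_cancel₀ (a := f.map (algebraMap F E)) ?_ ?_⟩
  · rw [hf]
    exact (monic_prod_of_monic _ _ fun i _ => monic_X_sub_C _).ne_zero
  · rw [← Polynomial.map_mul, ← hh, hsplit, hf]

theorem natCast_mul_algebraMap_sum_coeff_mul_coeff (hψ : ψ.IsPrimitive) (hn : n ≠ 0)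
    (x y : 𝓡) :
    (n : E) * algebraMap F E (∑ i ∈ Finset.range n, (stdRep hn x).coeff i * (stdRep hn y).coeff i)
      = ∑ j, evalAt ψ j x * evalAt ψ (-j) y := by
  have heval (z : 𝓡) (j : ZMod n) : evalAt ψ j z
      = ∑ i ∈ Finset.range n, algebraMap F E ((stdRep hn z).coeff i) * ψ j ^ i := by
    conv_lhs => rw [← mk_stdRep hn z]
    simp_rw [evalAt_mk, aeval_eq_sum_range' (natDegree_stdRep_lt hn z), Algebra.smul_def]
  set A := fun i => algebraMap F E ((stdRep hn x).coeff i)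
  set B := fun k => algebraMap F E ((stdRep hn y).coeff k)
  symm
  calc ∑ j, evalAt ψ j x * evalAt ψ (-j) y
      = ∑ i ∈ Finset.range n, ∑ k ∈ Finset.range n, A i * B k * ∑ j, ψ j ^ i * ψ (-j) ^ k := by
        simp_rw [heval, Finset.sum_mul_sum]
        rw [Finset.sum_comm]
        refine Finset.sum_congr rfl fun i _ => ?_
        rw [Finset.sum_comm]
        refine Finset.sum_congr rfl fun k _ => ?_
        rw [Finset.mul_sum]
        exact Finset.sum_congr rfl fun j _ => by ring
    _ = ∑ i ∈ Finset.range n, A i * B i * n := by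
        refine Finset.sum_congr rfl fun i hi => ?_
        rw [Finset.sum_congr rfl fun k hk => by
          rw [hψ.sum_pow_mul_pow_neg (Finset.mem_range.1 hi) (Finset.mem_range.1 hk)]]
        simp [hi]
    _ = _ := by simp [A, B, Finset.mul_sum, mul_comm]

theorem dualCode_cyclicCode (hψ : ψ.IsPrimitive) [NeZero (n : E)] (hn : n ≠ 0) {f : F[X]}
    {P : Finset (ZMod n)} (hf : f.map (algebraMap F E) = ∏ i ∈ P, (X - C (ψ i))) :
    dualCode F n hn (cyclicCode F n f) = zeroCode F ψ (-↑P) := by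
  have horth (x y : 𝓡) :
      ∑ i ∈ Finset.range n, (stdRep hn x).coeff i * (stdRep hn y).coeff i = 0 ↔
        ∑ j, evalAt ψ j x * evalAt ψ (-j) y = 0 := by
    rw [← natCast_mul_algebraMap_sum_coeff_mul_coeff hψ hn, mul_eq_zero,
      map_eq_zero_iff _ (algebraMap F E).injective]
    simp [NeZero.ne (n : E)]
  obtain ⟨h, hh⟩ := exists_map_eq_prod_compl hψ hf
  have hzh := zeroSet_mk hψ hh
  rw [cyclicCode_eq_zeroCode hψ hf]
  ext y
  simp only [dualCode, Set.mem_ofPred_eq, horth]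
  constructor
  · intro hy j hj
    -- Pairing `y` with the codewords `h X^k` yields every Fourier coefficient of
    -- `j' ↦ h(θ^j') y(θ^-j')`, and `h(θ^-j) ≠ 0` for `-j ∈ P`.
    have hw := hψ.eq_zero_of_forall_sum_mul_eq_zero
      (w := fun j' => evalAt ψ j' (AdjoinRoot.mk _ h) * evalAt ψ (-j') y) (fun k => ?_) (-j)
    · simp only [neg_neg] at hw
      refine (mul_eq_zero.1 hw).resolve_left fun h0 => ?_
      have h0' : -j ∈ zeroSet ψ (AdjoinRoot.mk _ h) := h0
      simp [hzh] at h0'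
      exact h0' hj
    · have hmem : AdjoinRoot.mk _ h * AdjoinRoot.root _ ^ k.val ∈ zeroCode F ψ (↑P)ᶜ :=
        fun j hj => by
          show evalAt ψ j _ = 0
          rw [map_mul, show evalAt ψ j (AdjoinRoot.mk _ h) = 0 from hzh.ge (by simpa using hj),
            zero_mul]
      rw [← hy _ hmem]
      refine Finset.sum_congr rfl fun j' _ => ?_
      rw [map_mul (evalAt ψ j'), map_pow, evalAt_root, ← AddChar.map_nsmul_eq_pow, nsmul_eq_mul,
        ZMod.natCast_zmod_val]
      ring
  · intro hy x hx
    refine Finset.sum_eq_zero fun j _ => ?_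
    by_cases hj : j ∈ P
    · rw [show evalAt ψ (-j) y = 0 from hy (by simpa using hj), mul_zero]
    · rw [show evalAt ψ j x = 0 from hx hj, zero_mul]

theorem preimage_affine_compl_eq_neg_iff {s s' : ZMod n} (hss' : s * s' = 1) (t : ZMod n)
    (P : Finset (ZMod n)) :
    (fun j => s' * j + -t) ⁻¹' (↑P)ᶜ = -↑P ↔ P.image (fun i => -s * (i + t)) = Pᶜ := by
  rw [← Finset.coe_inj, Finset.coe_image, Finset.coe_compl,
    Set.image_eq_preimage_of_inverse (g := fun j => -s' * j - t)
      (fun i => by linear_combination (i + t) * hss') (fun j => by linear_combination j * hss')]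
  simp only [Set.ext_iff, Set.mem_preimage, Set.mem_compl_iff, Set.mem_neg, Finset.mem_coe]
  constructor <;> intro h j
  · have := h (-j)
    rw [neg_neg] at this
    rw [show -s' * j - t = s' * -j + -t by ring]
    tauto
  · have := h (-j)
    rw [show -s' * -j - t = s' * j + -t by ring] at this
    tauto

theorem image_compMonomial_cyclicCode_eq_dualCode_iff (hψ : ψ.IsPrimitive) [NeZero (n : E)]
    (hn : n ≠ 0) {f : F[X]} {P : Finset (ZMod n)}
    (hf : f.map (algebraMap F E) = ∏ i ∈ P, (X - C (ψ i))) {s s' t : ℕ}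
    (hss' : s * s' ≡ 1 [MOD n]) {b : F} (hbt : algebraMap F E b = ψ (-t)) :
    (fun x => AdjoinRoot.mk _ ((stdRep hn x).comp (C b * X ^ s'))) '' (cyclicCode F n f : Set 𝓡)
        = dualCode F n hn (cyclicCode F n f) ↔
      P.image (fun i => -(s : ZMod n) * (i + t)) = Pᶜ := by
  have hb : b ^ n = 1 := (algebraMap F E).injective (by
    rw [map_pow, hbt, ψ.zmod_apply_pow_eq_one, map_one])
  have hss'Z : (s : ZMod n) * s' = 1 := by
    exact_mod_cast (ZMod.natCast_eq_natCast_iff _ _ _).2 hss'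
  obtain ⟨h, hh⟩ := exists_map_eq_prod_compl hψ hf
  have hrev (j : ZMod n) : ((n - 1 : ℕ) : ZMod n) * j + 0 = -j := by
    rw [Nat.cast_sub NeZero.one_le, ZMod.natCast_self]
    ring
  rw [funext (mk_comp_stdRep hn b s' hb), dualCode_cyclicCode hψ hn hf,
    cyclicCode_eq_zeroCode hψ hf, image_compMonomial_zeroCode hbt hb (by rwa [mul_comm] at hss'),
    ← preimage_affine_compl_eq_neg_iff hss'Z]
  -- The zero sets on both sides are realised by `φ(h)` and by `f(X^{n-1})`.
  refine ⟨eq_of_zeroCode_eq ψ (x := compMonomial n b s' hb (AdjoinRoot.mk _ h))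
    (x' := compMonomial n 1 (n - 1) (one_pow n) (AdjoinRoot.mk _ f)) ?_ ?_, fun h => by rw [h]⟩
  · rw [zeroSet_compMonomial hbt, zeroSet_mk hψ hh, Finset.coe_compl]
  · rw [zeroSet_compMonomial (τ := 0) (by simp), zeroSet_mk hψ hf]
    ext j
    simp [hrev]

end CyclicCode

theorem stmt10_general (F : Type*) [Field F] [Fintype F] (n : ℕ) [NeZero n] (hn : 0 < n)
    (E : Type*) [Field E] [Algebra F E] (θ : E) (hθ : IsPrimitiveRoot θ n)
    (P : Finset (ZMod n))
    (fPF : F[X]) (hfPF : fPF.map (algebraMap F E) = fPoly θ P) :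
    (∃ (s s' t : ℕ) (b : F), Nat.Coprime s n ∧ s * s' ≡ 1 [MOD n] ∧
        Fintype.card F * t ≡ t [MOD n] ∧ algebraMap F E b = (θ ^ t)⁻¹ ∧
        (fun x => AdjoinRoot.mk (X ^ n - 1 : F[X]) ((stdRep hn.ne' x).comp (C b * X ^ s'))) ''
            (cyclicCode F n fPF : Set (AdjoinRoot (X ^ n - 1 : F[X]))) =
          dualCode F n hn.ne' (cyclicCode F n fPF : Set (AdjoinRoot (X ^ n - 1 : F[X])))) ↔
    (∃ s t : ℕ, Nat.Coprime s n ∧ Fintype.card F * t ≡ t [MOD n] ∧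
        P.image (fun i => -(s : ZMod n) * (i + (t : ZMod n))) = Pᶜ) := by
  set ψ := AddChar.zmodChar n hθ.pow_eq_one
  have hψ : ψ.IsPrimitive := AddChar.zmodChar_primitive_of_primitive_root n hθ
  have := hθ.neZero'
  have hinv (t : ℕ) : (θ ^ t)⁻¹ = ψ (-t) := by
    rw [AddChar.map_neg_eq_inv, AddChar.zmodChar_apply']
  constructor
  · rintro ⟨s, s', t, b, hs, hss', hqt, hb, himage⟩
    exact ⟨s, t, hs, hqt, (CyclicCode.image_compMonomial_cyclicCode_eq_dualCode_iff hψ hn.ne'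
      hfPF hss' (hb.trans (hinv t))).1 himage⟩
  · rintro ⟨s, t, hs, hqt, himage⟩
    obtain ⟨s', hss'⟩ := hs.exists_mul_modEq_one
    obtain ⟨b, hb⟩ : ∃ b : F, algebraMap F E b = ψ (-t) := by
      refine FiniteField.exists_algebraMap_eq_of_pow_card_eq ?_
      rw [← AddChar.map_nsmul_eq_pow, nsmul_eq_mul, mul_neg, ← Nat.cast_mul,
        (ZMod.natCast_eq_natCast_iff _ _ _).2 hqt]
    exact ⟨s, s', t, b, hs, hss', hqt, hb.trans (hinv t).symm,
      (CyclicCode.image_compMonomial_cyclicCode_eq_dualCode_iff hψ hn.ne' hfPF hss' hb).2 himage⟩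

/-- `C_P` is isometrically self-dual, i.e. `φ_{s,t}(C_P) = C_P^⊥` for some
isometry `φ_{s,t} : a(X) ↦ a(θ^{−t} X^{s⁻¹})`, if and only if there exist `s ∈ (ℤ/nℤ)^*`
and `t` with `q·t ≡ t (mod n)` such that `ℤ/nℤ` is the disjoint union of `P` and
`ρ_{−s,t}(P) = {−s(i+t) : i ∈ P}`. -/
theorem stmt10 (F : Type*) [Field F] [Fintype F] (n : ℕ) [NeZero n] (hn : 0 < n)
    (hcop : Nat.Coprime (Fintype.card F) n)
    (E : Type*) [Field E] [Algebra F E] (θ : E) (hθ : IsPrimitiveRoot θ n)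
    (P : Finset (ZMod n))
    (hP : P.image (fun i => (Fintype.card F : ZMod n) * i) = P)
    (fPF : F[X]) (hfPF : fPF.map (algebraMap F E) = fPoly θ P) :
    (∃ (s s' t : ℕ) (b : F), Nat.Coprime s n ∧ s * s' ≡ 1 [MOD n] ∧
        Fintype.card F * t ≡ t [MOD n] ∧ algebraMap F E b = (θ ^ t)⁻¹ ∧
        (fun x => AdjoinRoot.mk (X ^ n - 1 : F[X]) ((stdRep hn.ne' x).comp (C b * X ^ s'))) ''
            (cyclicCode F n fPF : Set (AdjoinRoot (X ^ n - 1 : F[X]))) =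
          dualCode F n hn.ne' (cyclicCode F n fPF : Set (AdjoinRoot (X ^ n - 1 : F[X])))) ↔
    (∃ s t : ℕ, Nat.Coprime s n ∧ Fintype.card F * t ≡ t [MOD n] ∧
        P.image (fun i => -(s : ZMod n) * (i + (t : ZMod n))) = Pᶜ) :=
  stmt10_general F n hn E θ hθ P fPF hfPF
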